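/- arXiv:2405.14064 — 6 statements merged into one kernel-verified Lean document; each statement's English description precedes it below -/
import Mathlib

section
/- For any ε > 0 and any v, w ∈ ℝ^L, if ‖v − w‖ < ε then argmax^ε(v) ∩ argmax^ε(w) ≠ ∅. In particular, viewed as a map on the simplex Δ_{L−1}, the inflated argmax argmax^ε is ε-compatible. -/
/-!
Put `c = ε/√2`. Raising the `j`-th coordinate of `x` to `m + c` and capping the others at `m`
lands in `R_j^ε`, which bounds `dist(x, R_j^ε)²` by `(m + c - x_j)² + ∑_ℓ (x_ℓ - m)₊²`.
If the two inflated argmax sets were disjoint, let `j` maximise `v` over the indices outside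
`argmax^ε(v)` and `k` maximise `w` over those outside `argmax^ε(w)`, say with `w_k ≤ v_j`.
Every coordinate then has `v_ℓ ≤ v_j` or `w_ℓ ≤ w_k`, and the two test points at the common
level `m = v_j` force `‖v - w‖² ≥ 2c² = ε²`: the coordinates where `v` exceeds `m` contribute
at least `(c + v_j - w_k)²`, those where `w` exceeds `m` the rest.
-/

noncomputable section

/-- The set `R_j^ε = {w ∈ ℝ^L : w_j ≥ max_{ℓ≠j} w_ℓ + ε/√2}`. -/
def Rset (L : ℕ) (ε : ℝ) (j : Fin L) : Set (EuclideanSpace ℝ (Fin L)) :=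
  {w | ∀ ℓ : Fin L, ℓ ≠ j → w ℓ + ε / Real.sqrt 2 ≤ w j}

/-- The inflated argmax: `argmax^ε(w) = {j ∈ [L] : dist(w, R_j^ε) < ε}`. -/
def inflatedArgmax (L : ℕ) (ε : ℝ) (w : EuclideanSpace ℝ (Fin L)) : Set (Fin L) :=
  {j | Metric.infDist w (Rset L ε j) < ε}

open Finset Metric

lemma sq_add_le_sum_sq_add {ι : Type*} {s : Finset ι} {x : ι → ℝ} {c d : ℝ}
    (hx : ∀ i ∈ s, 0 ≤ x i) (hc : 0 < c) (hd : 0 ≤ d) (h : c ^ 2 ≤ ∑ i ∈ s, x i ^ 2) :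
    (c + d) ^ 2 ≤ ∑ i ∈ s, (x i + d) ^ 2 := by
  have hs : s.Nonempty := by
    by_contra hs
    rw [not_nonempty_iff_eq_empty.mp hs, sum_empty] at h
    nlinarith
  have hcard : (1 : ℝ) ≤ #s := by exact_mod_cast hs.card_pos
  have hsum : c ≤ ∑ i ∈ s, x i :=
    abs_le_of_sq_le_sq' (h.trans (sum_sq_le_sq_sum_of_nonneg hx)) (sum_nonneg hx) |>.2
  have expand : ∑ i ∈ s, (x i + d) ^ 2 = ∑ i ∈ s, x i ^ 2 + 2 * d * ∑ i ∈ s, x i + #s * d ^ 2 := by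
    rw [sum_congr rfl fun i _ => add_sq (x i) d, sum_add_distrib, sum_add_distrib, sum_const,
      nsmul_eq_mul, mul_sum]
    simp only [mul_comm, mul_left_comm]
  rw [expand]
  nlinarith [mul_le_mul_of_nonneg_left hsum hd, mul_le_mul_of_nonneg_right hcard (sq_nonneg d)]

lemma two_mul_sq_le_sum_sq_sub {ι : Type*} [Fintype ι] {v w : ι → ℝ} {m a c : ℝ}
    (hc : 0 < c) (ha : a ≤ m) (hbelow : ∀ i, v i ≤ m ∨ w i ≤ a)
    (hv : c ^ 2 ≤ ∑ i, max (v i - m) 0 ^ 2)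
    (hw : 2 * c ^ 2 ≤ (m + c - a) ^ 2 + ∑ i, max (w i - m) 0 ^ 2) :
    2 * c ^ 2 ≤ ∑ i, (v i - w i) ^ 2 := by
  classical
  set P := univ.filter fun i => m < v i
  have hvP : ∑ i, max (v i - m) 0 ^ 2 = ∑ i ∈ P, (v i - m) ^ 2 := by
    rw [sum_filter]
    refine sum_congr rfl fun i _ => ?_
    split_ifs with hi
    · rw [max_eq_left (by linarith)]
    · rw [max_eq_right (by linarith), sq, zero_mul]
  have hP : (m + c - a) ^ 2 ≤ ∑ i ∈ P, (v i - m + (m - a)) ^ 2 := by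
    rw [show m + c - a = c + (m - a) by ring]
    exact sq_add_le_sum_sq_add (fun i hi => by linarith [(mem_filter.mp hi).2]) hc
      (by linarith) (hvP ▸ hv)
  have hpoint : ∀ i, (if m < v i then (v i - m + (m - a)) ^ 2 else 0) + max (w i - m) 0 ^ 2
      ≤ (v i - w i) ^ 2 := by
    intro i
    split_ifs with hi
    · have hwi : w i ≤ a := (hbelow i).resolve_left (not_le.mpr hi)
      rw [max_eq_right (by linarith)]
      nlinarith
    · rcases le_total (w i) m with hwi | hwi
      · rw [max_eq_right (by linarith)]
        nlinarith [sq_nonneg (v i - w i)]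
      · rw [max_eq_left (by linarith)]
        nlinarith
  have hsum := sum_le_sum fun i (_ : i ∈ univ) => hpoint i
  rw [sum_add_distrib, ← sum_filter] at hsum
  linarith

lemma sq_div_sqrt_two (ε : ℝ) : (ε / Real.sqrt 2) ^ 2 = ε ^ 2 / 2 := by
  rw [div_pow, Real.sq_sqrt zero_le_two]

section InflatedArgmax

variable {L : ℕ} {ε : ℝ}

lemma infDist_Rset_sq_le (x : EuclideanSpace ℝ (Fin L)) (j : Fin L) (m : ℝ) :
    infDist x (Rset L ε j) ^ 2
      ≤ (m + ε / Real.sqrt 2 - x j) ^ 2 + ∑ ℓ, max (x ℓ - m) 0 ^ 2 := by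
  classical
  set c := ε / Real.sqrt 2
  set p : EuclideanSpace ℝ (Fin L) :=
    WithLp.toLp 2 fun ℓ => if ℓ = j then m + c else min (x ℓ) m
  have hp : p ∈ Rset L ε j := fun ℓ hℓ => by
    simp only [p, hℓ, ↓reduceIte]
    linarith [min_le_right (x ℓ) m]
  have hpoint : ∀ ℓ, dist (x ℓ) (p ℓ) ^ 2
      ≤ (if ℓ = j then (m + c - x j) ^ 2 else 0) + max (x ℓ - m) 0 ^ 2 := by
    intro ℓ
    rw [Real.dist_eq, sq_abs]
    simp only [p]
    split_ifs with hℓ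
    · subst hℓ
      nlinarith [sq_nonneg (max (x ℓ - m) 0)]
    · rcases le_total (x ℓ) m with h | h
      · simp [min_eq_left h, max_eq_right (sub_nonpos.mpr h)]
      · simp [min_eq_right h, max_eq_left (sub_nonneg.mpr h)]
  calc infDist x (Rset L ε j) ^ 2 ≤ dist x p ^ 2 :=
        pow_le_pow_left₀ infDist_nonneg (infDist_le_dist_of_mem hp) 2
    _ = ∑ ℓ, dist (x ℓ) (p ℓ) ^ 2 := EuclideanSpace.dist_sq_eq x p
    _ ≤ _ := by
        refine (sum_le_sum fun ℓ _ => hpoint ℓ).trans_eq ?_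
        rw [sum_add_distrib, sum_ite_eq' univ j, if_pos (mem_univ j)]

lemma mem_inflatedArgmax_of_forall_le (hε : 0 < ε) {x : EuclideanSpace ℝ (Fin L)} {j : Fin L}
    (hj : ∀ ℓ, x ℓ ≤ x j) : j ∈ inflatedArgmax L ε x := by
  have hbound := infDist_Rset_sq_le (ε := ε) x j (x j)
  have hzero : ∑ ℓ, max (x ℓ - x j) 0 ^ 2 = 0 :=
    sum_eq_zero fun ℓ _ => by rw [max_eq_right (sub_nonpos.mpr (hj ℓ))]; norm_num
  rw [add_sub_cancel_left, hzero, add_zero, sq_div_sqrt_two] at hbound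
  exact lt_of_pow_lt_pow_left₀ 2 hε.le (by nlinarith)

lemma sq_le_of_notMem_inflatedArgmax {x : EuclideanSpace ℝ (Fin L)} {j : Fin L}
    (hj : j ∉ inflatedArgmax L ε x) (hε : 0 < ε) (m : ℝ) :
    ε ^ 2 ≤ (m + ε / Real.sqrt 2 - x j) ^ 2 + ∑ ℓ, max (x ℓ - m) 0 ^ 2 :=
  (pow_le_pow_left₀ hε.le (not_lt.mp hj) 2).trans (infDist_Rset_sq_le x j m)

lemma le_dist_of_notMem_inflatedArgmax (hε : 0 < ε) {v w : EuclideanSpace ℝ (Fin L)}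
    {j k : Fin L} (hj : j ∉ inflatedArgmax L ε v) (hk : k ∉ inflatedArgmax L ε w)
    (hkj : w k ≤ v j) (hbelow : ∀ ℓ, v ℓ ≤ v j ∨ w ℓ ≤ w k) :
    ε ≤ dist v w := by
  have hc : 0 < ε / Real.sqrt 2 := by positivity
  have hv := sq_le_of_notMem_inflatedArgmax hj hε (v j)
  have hw := sq_le_of_notMem_inflatedArgmax hk hε (v j)
  have hε2 : ε ^ 2 = 2 * (ε / Real.sqrt 2) ^ 2 := by rw [sq_div_sqrt_two]; ring
  rw [add_sub_cancel_left, hε2] at hv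
  rw [hε2] at hw
  have key := two_mul_sq_le_sum_sq_sub hc hkj hbelow (by linarith) hw
  have hdist : dist v w ^ 2 = ∑ ℓ, (v ℓ - w ℓ) ^ 2 := by
    simp only [EuclideanSpace.dist_sq_eq, Real.dist_eq, sq_abs]
  exact le_of_pow_le_pow_left₀ two_ne_zero dist_nonneg (hdist ▸ hε2 ▸ key)

end InflatedArgmax

/-- For any `ε > 0` and `v, w ∈ ℝ^L`, if `‖v − w‖ < ε` then
`argmax^ε(v) ∩ argmax^ε(w) ≠ ∅`; i.e., the inflated argmax is `ε`-compatible. -/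
theorem inflatedArgmax_compatible (L : ℕ) (hL : 2 ≤ L) (ε : ℝ) (hε : 0 < ε)
    (v w : EuclideanSpace ℝ (Fin L)) (h : dist v w < ε) :
    (inflatedArgmax L ε v ∩ inflatedArgmax L ε w).Nonempty := by
  have : Nonempty (Fin L) := ⟨⟨0, by omega⟩⟩
  by_contra hempty
  have hcover : ∀ ℓ, ℓ ∉ inflatedArgmax L ε v ∨ ℓ ∉ inflatedArgmax L ε w := fun ℓ =>
    not_and_or.mp fun hℓ => hempty ⟨ℓ, hℓ⟩
  obtain ⟨j₀, hj₀⟩ := Finite.exists_max fun ℓ => v ℓ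
  obtain ⟨k₀, hk₀⟩ := Finite.exists_max fun ℓ => w ℓ
  obtain ⟨j, hj, hj_max⟩ := Set.exists_max_image {ℓ | ℓ ∉ inflatedArgmax L ε v} (fun ℓ => v ℓ)
    (Set.toFinite _) ⟨k₀, (hcover k₀).resolve_right (not_not.mpr
      (mem_inflatedArgmax_of_forall_le hε hk₀))⟩
  obtain ⟨k, hk, hk_max⟩ := Set.exists_max_image {ℓ | ℓ ∉ inflatedArgmax L ε w} (fun ℓ => w ℓ)
    (Set.toFinite _) ⟨j₀, (hcover j₀).resolve_left (not_not.mpr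
      (mem_inflatedArgmax_of_forall_le hε hj₀))⟩
  have hbelow : ∀ ℓ, v ℓ ≤ v j ∨ w ℓ ≤ w k := fun ℓ => (hcover ℓ).imp (hj_max ℓ) (hk_max ℓ)
  rcases le_total (w k) (v j) with hkj | hjk
  · exact (le_dist_of_notMem_inflatedArgmax hε hj hk hkj hbelow).not_gt h
  · exact (le_dist_of_notMem_inflatedArgmax hε hk hj hjk fun ℓ => (hbelow ℓ).symm).not_gt
      (dist_comm v w ▸ h)
end
end

section
/- For any w ∈ ℝ^L, the intersection over all ε > 0 of argmax^ε(w) equals argmax(w) = {j ∈ [L] : w_j = max_ℓ w_ℓ}. Equivalently, for every j with w_j < max_ℓ w_ℓ there exists ε > 0 such that j ∉ argmax^ε(w). -/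
noncomputable section

/-!
If `w_j` is maximal, moving `w` by `ε/√2` along coordinate `j` lands in `R_j^ε`, so
`dist(w, R_j^ε) ≤ ε/√2 < ε`. If `w_ℓ > w_j`, every `v ∈ R_j^ε` has
`(v_j - w_j) - (v_ℓ - w_ℓ) ≥ w_ℓ - w_j + ε/√2`, while the left side is at most `√2 ‖v - w‖`;
for `ε = √2 (w_ℓ - w_j)` this forces `dist(w, R_j^ε) ≥ ε`.
-/

namespace EuclideanSpace

variable {ι : Type*} [Fintype ι]

theorem sq_add_sq_sub_le_dist_sq (x y : EuclideanSpace ℝ ι) {i k : ι} (hik : i ≠ k) :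
    (x i - y i) ^ 2 + (x k - y k) ^ 2 ≤ dist x y ^ 2 := by
  classical
  calc (x i - y i) ^ 2 + (x k - y k) ^ 2 = ∑ m ∈ {i, k}, dist (x m) (y m) ^ 2 := by
        rw [Finset.sum_pair hik, Real.dist_eq, Real.dist_eq, sq_abs, sq_abs]
    _ ≤ ∑ m, dist (x m) (y m) ^ 2 :=
        Finset.sum_le_sum_of_subset_of_nonneg (Finset.subset_univ _) fun _ _ _ => sq_nonneg _
    _ = dist x y ^ 2 := (EuclideanSpace.dist_sq_eq x y).symm

theorem sub_sub_sub_le_sqrt_two_mul_dist (x y : EuclideanSpace ℝ ι) {i k : ι} (hik : i ≠ k) :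
    (x i - y i) - (x k - y k) ≤ √2 * dist x y := by
  refine le_trans (le_abs_self _) (abs_le_of_sq_le_sq ?_ (by positivity))
  rw [mul_pow, Real.sq_sqrt zero_le_two]
  nlinarith [sq_add_sq_sub_le_dist_sq x y hik, sq_nonneg ((x i - y i) + (x k - y k))]

end EuclideanSpace

theorem Rset_nonempty (L : ℕ) (ε : ℝ) (j : Fin L) : (Rset L ε j).Nonempty :=
  ⟨EuclideanSpace.single j (ε / √2), fun ℓ hℓ => by simp [hℓ]⟩

theorem infDist_Rset_le_of_forall_le {L : ℕ} (ε : ℝ) {w : EuclideanSpace ℝ (Fin L)} {j : Fin L}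
    (hj : ∀ ℓ, w ℓ ≤ w j) : Metric.infDist w (Rset L ε j) ≤ |ε| / √2 := by
  have hmem : w + EuclideanSpace.single j (ε / √2) ∈ Rset L ε j := fun ℓ hℓ => by
    simpa [hℓ] using hj ℓ
  calc Metric.infDist w (Rset L ε j)
      ≤ dist w (w + EuclideanSpace.single j (ε / √2)) := Metric.infDist_le_dist_of_mem hmem
    _ = |ε| / √2 := by
      rw [dist_self_add_right, PiLp.norm_single, Real.norm_eq_abs, abs_div,
        abs_of_pos (by positivity : (0 : ℝ) < √2)]

theorem le_sqrt_two_mul_infDist_Rset {L : ℕ} (ε : ℝ) (w : EuclideanSpace ℝ (Fin L))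
    {j ℓ : Fin L} (hℓj : ℓ ≠ j) :
    w ℓ - w j + ε / √2 ≤ √2 * Metric.infDist w (Rset L ε j) := by
  rw [← div_le_iff₀' (by positivity)]
  refine (Metric.le_infDist (Rset_nonempty L ε j)).2 fun v hv => ?_
  rw [div_le_iff₀' (by positivity), dist_comm]
  linarith [hv ℓ hℓj, EuclideanSpace.sub_sub_sub_le_sqrt_two_mul_dist v w hℓj.symm]

theorem iInter_inflatedArgmax_eq_argmax_general (L : ℕ)
    (w : EuclideanSpace ℝ (Fin L)) :
    (⋂ (ε : ℝ) (_ : 0 < ε), inflatedArgmax L ε w)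
      = {j : Fin L | ∀ ℓ : Fin L, w ℓ ≤ w j} := by
  have hs : (0 : ℝ) < √2 := by positivity
  ext j
  simp only [Set.mem_iInter, Set.mem_ofPred_eq, inflatedArgmax]
  refine ⟨fun hj ℓ => ?_, fun hj ε hε => ?_⟩
  · by_contra! hlt
    have hδ : 0 < √2 * (w ℓ - w j) := mul_pos hs (sub_pos.2 hlt)
    have hlow := le_sqrt_two_mul_infDist_Rset (√2 * (w ℓ - w j)) w (ne_of_apply_ne w hlt.ne')
    rw [mul_div_cancel_left₀ _ hs.ne'] at hlow
    have hup : √2 * Metric.infDist w (Rset L _ j) < 2 * (w ℓ - w j) :=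
      calc _ < √2 * (√2 * (w ℓ - w j)) := mul_lt_mul_of_pos_left (hj _ hδ) hs
        _ = 2 * (w ℓ - w j) := by rw [← mul_assoc, Real.mul_self_sqrt zero_le_two]
    linarith
  · calc Metric.infDist w (Rset L ε j) ≤ |ε| / √2 := infDist_Rset_le_of_forall_le ε hj
      _ < ε := by
        rw [abs_of_pos hε, div_lt_iff₀ hs]
        nlinarith [Real.one_lt_sqrt_two]

/-- The intersection over all `ε > 0` of `argmax^ε(w)` equals the set of
maximizing entries `argmax(w) = {j : w_j = max_ℓ w_ℓ}`. -/
theorem iInter_inflatedArgmax_eq_argmax (L : ℕ) (hL : 2 ≤ L)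
    (w : EuclideanSpace ℝ (Fin L)) :
    (⋂ (ε : ℝ) (_ : 0 < ε), inflatedArgmax L ε w)
      = {j : Fin L | ∀ ℓ : Fin L, w ℓ ≤ w j} :=
  iInter_inflatedArgmax_eq_argmax_general L w
end
end

section
/- For any w ∈ ℝ^L and any ε > 0, the equation (Σ_{j∈[L]} (w_j − c)_+)² + Σ_{j∈[L]} (w_j − c)_+² = ε² has a unique real solution c = c_ε(w). (Here (a)_+ = max{a, 0}.) -/
noncomputable section

/-- For any `w ∈ ℝ^L` and `ε > 0`, the equation
`(Σ_j (w_j − c)_+)² + Σ_j (w_j − c)_+² = ε²` has a unique real solution `c`. -/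
theorem existsUnique_c (L : ℕ) (hL : 2 ≤ L) (ε : ℝ) (hε : 0 < ε) (w : Fin L → ℝ) :
    ∃! c : ℝ,
      (∑ j : Fin L, max (w j - c) 0)^2 + ∑ j : Fin L, (max (w j - c) 0)^2 = ε^2 := by
  have hLpos : 0 < L := by omega
  haveI : Nonempty (Fin L) := ⟨⟨0, hLpos⟩⟩
  set f : ℝ → ℝ := fun c =>
    (∑ j : Fin L, max (w j - c) 0)^2 + ∑ j : Fin L, (max (w j - c) 0)^2 with hf
  -- f is strictly decreasing where some coordinate is active
  have key : ∀ c c' : ℝ, c < c' → (∃ j, c' < w j) → f c' < f c := by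
    rintro c c' hcc ⟨j, hj⟩
    have hA : ∀ k, max (w k - c') 0 ≤ max (w k - c) 0 := fun k =>
      max_le_max (by linarith) le_rfl
    have hAj : max (w j - c') 0 < max (w j - c) 0 := by
      rw [max_eq_left (by linarith : (0:ℝ) ≤ w j - c'), max_eq_left (by linarith)]
      linarith
    have hsum : ∑ k : Fin L, max (w k - c') 0 < ∑ k : Fin L, max (w k - c) 0 :=
      Finset.sum_lt_sum (fun k _ => hA k) ⟨j, Finset.mem_univ j, hAj⟩
    have hnn : 0 ≤ ∑ k : Fin L, max (w k - c') 0 :=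
      Finset.sum_nonneg fun k _ => le_max_right _ _
    have h1 : (∑ k : Fin L, max (w k - c') 0)^2 < (∑ k : Fin L, max (w k - c) 0)^2 :=
      pow_lt_pow_left₀ hsum hnn two_ne_zero
    have h2 : ∑ k : Fin L, (max (w k - c') 0)^2 ≤ ∑ k : Fin L, (max (w k - c) 0)^2 :=
      Finset.sum_le_sum fun k _ => pow_le_pow_left₀ (le_max_right _ _) (hA k) 2
    simpa [hf] using add_lt_add_of_lt_of_le h1 h2
  have hcont : Continuous f := by
    apply Continuous.add
    · exact (continuous_finset_sum _ fun k _ =>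
        ((continuous_const.sub continuous_id).max continuous_const)).pow 2
    · exact continuous_finset_sum _ fun k _ =>
        ((continuous_const.sub continuous_id).max continuous_const).pow 2
  set a : ℝ := (Finset.univ.inf' Finset.univ_nonempty w) - ε with ha
  set b : ℝ := Finset.univ.sup' Finset.univ_nonempty w with hb
  have hab : a ≤ b := by
    obtain ⟨j⟩ := (inferInstance : Nonempty (Fin L))
    have h1 := Finset.inf'_le w (Finset.mem_univ j)
    have h2 := Finset.le_sup' w (Finset.mem_univ j)
    simp only [ha, hb]; linarith
  have hfb : f b = 0 := by
    have : ∀ k : Fin L, max (w k - b) 0 = 0 := fun k => by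
      have := Finset.le_sup' w (Finset.mem_univ k)
      simp only [hb]
      exact max_eq_right (by linarith)
    simp [hf, this]
  have hfa : ε^2 ≤ f a := by
    obtain ⟨j⟩ := (inferInstance : Nonempty (Fin L))
    have hinf := Finset.inf'_le w (Finset.mem_univ j)
    have hterm : ε^2 ≤ (max (w j - a) 0)^2 := by
      have h1 : ε ≤ w j - a := by simp only [ha]; linarith
      have h2 : max (w j - a) 0 = w j - a := max_eq_left (by linarith)
      rw [h2]
      exact pow_le_pow_left₀ hε.le h1 2
    have hsum : ε^2 ≤ ∑ k : Fin L, (max (w k - a) 0)^2 :=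
      le_trans hterm (Finset.single_le_sum (f := fun k => (max (w k - a) 0)^2)
        (fun k _ => sq_nonneg _) (Finset.mem_univ j))
    have : 0 ≤ (∑ k : Fin L, max (w k - a) 0)^2 := sq_nonneg _
    simp only [hf]; linarith
  have hmem : ε^2 ∈ Set.Icc (f b) (f a) := ⟨by rw [hfb]; positivity, hfa⟩
  obtain ⟨c, hc, hfc⟩ := intermediate_value_Icc' hab hcont.continuousOn hmem
  refine ⟨c, hfc, ?_⟩
  intro c' hc'
  have hc'f : f c' = ε^2 := hc'
  by_contra hne
  -- c solves, c' solves, c ≠ c'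
  have hpos : ∀ x : ℝ, f x = ε^2 → ∃ j, x < w j := by
    intro x hx
    by_contra h
    push_neg at h
    have : ∀ k : Fin L, max (w k - x) 0 = 0 := fun k =>
      max_eq_right (by have := h k; linarith)
    have : f x = 0 := by simp [hf, this]
    rw [hx] at this
    nlinarith
  rcases lt_or_gt_of_ne hne with h | h
  · have := key c' c h (hpos c hfc)
    rw [hfc, hc'f] at this; exact lt_irrefl _ this
  · have := key c c' h (hpos c' hc'f)
    rw [hfc, hc'f] at this; exact lt_irrefl _ this
end
end

section
/- For any ε > 0, the maps w ↦ c_ε(w) and w ↦ t_ε(w) are nondecreasing in w: if w, w′ ∈ ℝ^L satisfy w_j ≤ w′_j for all j ∈ [L], then c_ε(w) ≤ c_ε(w′) and t_ε(w) ≤ t_ε(w′). -/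
noncomputable section

/-- `c_ε(w)` and `t_ε(w)` are nondecreasing in `w`: if `w ≤ w′` coordinatewise,
`c = c_ε(w)` and `c′ = c_ε(w′)` (the unique solutions of the defining equations), then
`c_ε(w) ≤ c_ε(w′)` and `t_ε(w) ≤ t_ε(w′)`, where
`t_ε(w) = c_ε(w) + ε/√2 − Σ_j (w_j − c_ε(w))_+`. -/
theorem c_t_mono_in_w (L : ℕ) (hL : 2 ≤ L) (ε : ℝ) (hε : 0 < ε)
    (w w' : Fin L → ℝ) (hw : ∀ j, w j ≤ w' j) (c c' : ℝ)
    (hc : (∑ j : Fin L, max (w j - c) 0)^2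
        + ∑ j : Fin L, (max (w j - c) 0)^2 = ε^2)
    (hc' : (∑ j : Fin L, max (w' j - c') 0)^2
        + ∑ j : Fin L, (max (w' j - c') 0)^2 = ε^2) :
    c ≤ c' ∧
      c + ε / Real.sqrt 2 - ∑ j : Fin L, max (w j - c) 0
        ≤ c' + ε / Real.sqrt 2 - ∑ j : Fin L, max (w' j - c') 0 := by
  have hε2 : (0:ℝ) < ε^2 := by positivity
  have hu : ∀ j, 0 ≤ max (w j - c) 0 := fun j => le_max_right _ _
  have hv : ∀ j, 0 ≤ max (w' j - c') 0 := fun j => le_max_right _ _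
  have hS : 0 ≤ ∑ j : Fin L, max (w j - c) 0 :=
    Finset.sum_nonneg fun j _ => hu j
  have hS' : 0 ≤ ∑ j : Fin L, max (w' j - c') 0 :=
    Finset.sum_nonneg fun j _ => hv j
  -- there is an active coordinate for (w', c')
  have hex : ∃ j : Fin L, 0 < max (w' j - c') 0 := by
    by_contra hall
    push_neg at hall
    have h0 : ∀ j : Fin L, max (w' j - c') 0 = 0 :=
      fun j => le_antisymm (hall j) (hv j)
    simp only [h0] at hc'
    simp at hc'
    nlinarith
  -- Part 1 : c ≤ c'
  have hcc : c ≤ c' := by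
    by_contra hlt
    push_neg at hlt
    have hle : ∀ j : Fin L, max (w j - c) 0 ≤ max (w' j - c') 0 := fun j =>
      max_le_max (by linarith [hw j]) le_rfl
    obtain ⟨j, hj⟩ := hex
    have hpos : 0 < w' j - c' := by
      by_contra h
      push_neg at h
      rw [max_eq_right h] at hj
      exact lt_irrefl _ hj
    have hstrict : max (w j - c) 0 < max (w' j - c') 0 := by
      have h1 : max (w' j - c') 0 = w' j - c' := max_eq_left (le_of_lt hpos)
      rw [h1]
      exact max_lt (by linarith [hw j]) hpos
    have hsum : (∑ j : Fin L, max (w j - c) 0) < ∑ j : Fin L, max (w' j - c') 0 :=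
      Finset.sum_lt_sum (fun i _ => hle i) ⟨j, Finset.mem_univ j, hstrict⟩
    have hQ : (∑ j : Fin L, (max (w j - c) 0)^2) ≤ ∑ j : Fin L, (max (w' j - c') 0)^2 :=
      Finset.sum_le_sum fun i _ => pow_le_pow_left₀ (hu i) (hle i) 2
    have hA2 : (∑ j : Fin L, max (w j - c) 0)^2 < (∑ j : Fin L, max (w' j - c') 0)^2 := by
      nlinarith [hsum, hS]
    linarith
  -- Part 2 : monotonicity of t
  have hδ : 0 ≤ c' - c := by linarith
  have key : ∀ j : Fin L, max (w j - c) 0 ≤ max (w' j - c') 0 + (c' - c) := by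
    intro j
    apply max_le
    · have := hw j
      have := le_max_left (w' j - c') 0
      linarith
    · have := le_max_right (w' j - c') 0
      linarith
  have keysq : ∀ j : Fin L, (max (w j - c) 0)^2
      ≤ (max (w' j - c') 0)^2 + 2*(c'-c)*(max (w j - c) 0) := by
    intro j
    have h1 := key j
    have ha := hu j
    have hb := hv j
    rcases le_total (max (w j - c) 0) (max (w' j - c') 0) with h | h
    · nlinarith [pow_le_pow_left₀ ha h 2, mul_nonneg hδ ha]
    · have h2 : 0 ≤ ((c'-c) - (max (w j - c) 0 - max (w' j - c') 0))
          * (max (w j - c) 0 + max (w' j - c') 0) :=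
        mul_nonneg (by linarith) (by linarith)
      have h3 : 0 ≤ (c'-c) * (max (w j - c) 0 - max (w' j - c') 0) :=
        mul_nonneg hδ (by linarith)
      nlinarith [h2, h3]
  have hQs : (∑ j : Fin L, (max (w j - c) 0)^2)
      ≤ (∑ j : Fin L, (max (w' j - c') 0)^2)
        + 2*(c'-c)*(∑ j : Fin L, max (w j - c) 0) := by
    calc (∑ j : Fin L, (max (w j - c) 0)^2)
        ≤ ∑ j : Fin L, ((max (w' j - c') 0)^2 + 2*(c'-c)*(max (w j - c) 0)) :=
          Finset.sum_le_sum fun i _ => keysq i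
      _ = (∑ j : Fin L, (max (w' j - c') 0)^2)
            + 2*(c'-c)*(∑ j : Fin L, max (w j - c) 0) := by
          rw [Finset.sum_add_distrib, ← Finset.mul_sum]
  have hfin : (∑ j : Fin L, max (w' j - c') 0)
      ≤ (∑ j : Fin L, max (w j - c) 0) + (c' - c) := by
    by_contra h
    push_neg at h
    have h2 : ((∑ j : Fin L, max (w j - c) 0) + (c' - c))^2
        < (∑ j : Fin L, max (w' j - c') 0)^2 := by
      nlinarith [h, hS, hδ]
    nlinarith [hc, hc', hQs, h2, sq_nonneg (c'-c)]
  exact ⟨hcc, by linarith⟩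
end
end

section
/- Let k, k′ ≥ 1 be integers and ε > 0. For any vectors x, y ∈ ℝ^k with nonnegative entries, any x′, y′ ∈ ℝ^{k′} with nonnegative entries, and any r, r′ ∈ ℝ, if (xᵀ1_k)² + ‖x‖² = (x′ᵀ1_{k′})² + ‖x′‖² = ε² and xᵀ1_k + x′ᵀ1_{k′} = r + r′ + ε√2, then ‖x + y + r·1_k‖² + ‖x′ + y′ + r′·1_{k′}‖² ≥ ε². -/
/-!
For `v = x + y + r • 1` and scalars `a, b` with `a * b ≥ 0`, expanding `‖b • v - a • x‖² ≥ 0` and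
dropping `⟪x, y⟫ ≥ 0` gives `b² ‖v‖² ≥ 2ab (‖x‖² + r s) - a² ‖x‖²`, where `s = xᵀ1`; since
`‖x‖² ≤ s²`, the hypothesis gives `s² ≤ ε² ≤ 2 s²`. Taking `(a, b) = (ε s', D)` and `(ε s, D)` on
the two sides, with `D = ε (s + s') - √2 s s' > 0`, the terms in `r` and `r'` only enter through
`r + r' = s + s' - ε √2`, and the sum of the two bounds is
`ε² D² + 2 ε² s s' (√2 s - ε) (√2 s' - ε) ≥ ε² D²`.
-/

open Finset

theorem two_mul_mul_sub_sq_mul_le_sq_mul_sum_sq {ι : Type*} [Fintype ι] {x y : ι → ℝ}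
    {r a b : ℝ} (hx : ∀ i, 0 ≤ x i) (hy : ∀ i, 0 ≤ y i) (hab : 0 ≤ a * b) :
    2 * a * b * (∑ i, x i ^ 2 + r * ∑ i, x i) - a ^ 2 * ∑ i, x i ^ 2
      ≤ b ^ 2 * ∑ i, (x i + y i + r) ^ 2 := by
  have hpoint (i : ι) :
      2 * a * b * (x i ^ 2 + r * x i) - a ^ 2 * x i ^ 2 ≤ b ^ 2 * (x i + y i + r) ^ 2 := by
    nlinarith [sq_nonneg (b * (x i + y i + r) - a * x i),
      mul_nonneg hab (mul_nonneg (hx i) (hy i))]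
  calc 2 * a * b * (∑ i, x i ^ 2 + r * ∑ i, x i) - a ^ 2 * ∑ i, x i ^ 2
      = ∑ i, (2 * a * b * (x i ^ 2 + r * x i) - a ^ 2 * x i ^ 2) := by
        simp only [mul_sum, ← sum_add_distrib, ← sum_sub_distrib]
    _ ≤ ∑ i, b ^ 2 * (x i + y i + r) ^ 2 := sum_le_sum fun i _ ↦ hpoint i
    _ = b ^ 2 * ∑ i, (x i + y i + r) ^ 2 := (mul_sum ..).symm

theorem sq_le_add_of_quadratic_lower_bounds {ε s s' n n' r r' A A' : ℝ} (hε : 0 < ε)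
    (hs : 0 ≤ s) (hs' : 0 ≤ s') (hn : 0 ≤ n) (hn' : 0 ≤ n')
    (hns : n ≤ s ^ 2) (hns' : n' ≤ s' ^ 2)
    (h1 : s ^ 2 + n = ε ^ 2) (h2 : s' ^ 2 + n' = ε ^ 2) (h3 : s + s' = r + r' + ε * √2)
    (hA : ∀ a b, 0 ≤ a * b → 2 * a * b * (n + r * s) - a ^ 2 * n ≤ b ^ 2 * A)
    (hA' : ∀ a b, 0 ≤ a * b → 2 * a * b * (n' + r' * s') - a ^ 2 * n' ≤ b ^ 2 * A') :
    ε ^ 2 ≤ A + A' := by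
  set c := √2
  have hc : c ^ 2 = 2 := Real.sq_sqrt zero_le_two
  have hc2 : c < 2 := by nlinarith [Real.sqrt_nonneg 2]
  have hsε : s ≤ ε := by nlinarith
  have hs'ε : s' ≤ ε := by nlinarith
  have hεs : ε ≤ c * s :=
    (pow_le_pow_iff_left₀ hε.le (by positivity) two_ne_zero).1 (by rw [mul_pow, hc]; linarith)
  have hεs' : ε ≤ c * s' :=
    (pow_le_pow_iff_left₀ hε.le (by positivity) two_ne_zero).1 (by rw [mul_pow, hc]; linarith)
  have hss' : 0 < s * s' := mul_pos (by nlinarith) (by nlinarith)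
  obtain ⟨D, hD_def⟩ : ∃ D, D = ε * (s + s') - c * s * s' := ⟨_, rfl⟩
  have hD : 0 < D := by nlinarith
  have hgap : 0 ≤ 2 * ε ^ 2 * s * s' * (c * s - ε) * (c * s' - ε) := by
    have := sub_nonneg.2 hεs
    have := sub_nonneg.2 hεs'
    positivity
  have hsum : ε ^ 2 * D ^ 2 + 2 * ε ^ 2 * s * s' * (c * s - ε) * (c * s' - ε)
      = 2 * (ε * s') * D * (n + r * s) - (ε * s') ^ 2 * n
        + (2 * (ε * s) * D * (n' + r' * s') - (ε * s) ^ 2 * n') := by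
    rw [show n = ε ^ 2 - s ^ 2 by linarith, show n' = ε ^ 2 - s' ^ 2 by linarith,
      show r' = s + s' - r - ε * c by linarith, hD_def]
    linear_combination ε ^ 2 * s ^ 2 * s' ^ 2 * hc
  have hA₀ := hA (ε * s') D (by positivity)
  have hA₀' := hA' (ε * s) D (by positivity)
  exact le_of_mul_le_mul_right (by nlinarith) (pow_pos hD 2)

theorem vector_sum_lemma_general (k k' : ℕ) (ε : ℝ) (hε : 0 < ε)
    (x y : Fin k → ℝ) (x' y' : Fin k' → ℝ) (r r' : ℝ)
    (hx : ∀ i, 0 ≤ x i) (hy : ∀ i, 0 ≤ y i)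
    (hx' : ∀ i, 0 ≤ x' i) (hy' : ∀ i, 0 ≤ y' i)
    (h1 : (∑ i, x i)^2 + ∑ i, (x i)^2 = ε^2)
    (h2 : (∑ i, x' i)^2 + ∑ i, (x' i)^2 = ε^2)
    (h3 : (∑ i, x i) + (∑ i, x' i) = r + r' + ε * Real.sqrt 2) :
    ε^2 ≤ (∑ i, (x i + y i + r)^2) + ∑ i, (x' i + y' i + r')^2 :=
  sq_le_add_of_quadratic_lower_bounds hε (sum_nonneg fun i _ ↦ hx i)
    (sum_nonneg fun i _ ↦ hx' i) (sum_nonneg fun _ _ ↦ sq_nonneg _)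
    (sum_nonneg fun _ _ ↦ sq_nonneg _) (sum_sq_le_sq_sum_of_nonneg fun i _ ↦ hx i)
    (sum_sq_le_sq_sum_of_nonneg fun i _ ↦ hx' i) h1 h2 h3
    (fun _ _ hab ↦ two_mul_mul_sub_sq_mul_le_sq_mul_sum_sq hx hy hab)
    (fun _ _ hab ↦ two_mul_mul_sub_sq_mul_le_sq_mul_sum_sq hx' hy' hab)

/-- Technical vector lemma: for nonnegative `x, y ∈ ℝ^k`, `x′, y′ ∈ ℝ^{k′}` and
`r, r′ ∈ ℝ`, if `(xᵀ1)² + ‖x‖² = (x′ᵀ1)² + ‖x′‖² = ε²` and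
`xᵀ1 + x′ᵀ1 = r + r′ + ε√2`, then
`‖x + y + r·1‖² + ‖x′ + y′ + r′·1‖² ≥ ε²`. -/
theorem vector_sum_lemma (k k' : ℕ) (hk : 1 ≤ k) (hk' : 1 ≤ k') (ε : ℝ) (hε : 0 < ε)
    (x y : Fin k → ℝ) (x' y' : Fin k' → ℝ) (r r' : ℝ)
    (hx : ∀ i, 0 ≤ x i) (hy : ∀ i, 0 ≤ y i)
    (hx' : ∀ i, 0 ≤ x' i) (hy' : ∀ i, 0 ≤ y' i)
    (h1 : (∑ i, x i)^2 + ∑ i, (x i)^2 = ε^2)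
    (h2 : (∑ i, x' i)^2 + ∑ i, (x' i)^2 = ε^2)
    (h3 : (∑ i, x i) + (∑ i, x' i) = r + r' + ε * Real.sqrt 2) :
    ε^2 ≤ (∑ i, (x i + y i + r)^2) + ∑ i, (x' i + y' i + r')^2 :=
  vector_sum_lemma_general k k' ε hε x y x' y' r r' hx hy hx' hy' h1 h2 h3
end

section
/- Fix ε > 0, w ∈ ℝ^L, and j ∈ [L]. Then there is a unique a ∈ ℝ satisfying w_j = a + ε/√2 − Σ_{k≠j} (w_k − a)_+. Moreover, defining v ∈ ℝ^L by v_j = a + ε/√2 and v_k = min{a, w_k} for k ≠ j, the vector v is the (unique) Euclidean projection of w onto R_j^ε, i.e. v = argmin_{u ∈ R_j^ε} ‖w − u‖. -/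
/-! The map `a ↦ a - ∑_{k ≠ j} (w_k - a)_+` is continuous and strictly increasing, equals `a` for
large `a` and is at most `a` everywhere, so it takes the value `w_j - ε/√2` exactly once. For that
`a`, the residual `w - v` is `(w_k - a)_+ ≥ 0` off `j` and minus their sum at `j`, and it vanishes
wherever the constraint `v_k + ε/√2 ≤ v_j` is slack. Hence `⟪w - v, u - v⟫ ≤ 0` for every
`u ∈ R_j^ε`, which is the variational characterisation of the projection; strictness follows from
the Pythagorean expansion of `‖w - u‖²`. -/

noncomputable section

open Finset

section SubSumMaxSub

variable {ι : Type*} (s : Finset ι) (x : ι → ℝ)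

theorem strictMono_sub_sum_max_sub : StrictMono fun a : ℝ => a - ∑ k ∈ s, max (x k - a) 0 := by
  intro a b hab
  have : ∑ k ∈ s, max (x k - b) 0 ≤ ∑ k ∈ s, max (x k - a) 0 :=
    sum_le_sum fun k _ => max_le_max (by linarith) le_rfl
  dsimp only
  linarith

theorem continuous_sub_sum_max_sub : Continuous fun a : ℝ => a - ∑ k ∈ s, max (x k - a) 0 := by
  fun_prop

theorem existsUnique_sub_sum_max_sub_eq (y : ℝ) :
    ∃! a : ℝ, a - ∑ k ∈ s, max (x k - a) 0 = y := by
  obtain ⟨M, hM⟩ := (s.finite_toSet.image x).bddAbove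
  have h_le : y - ∑ k ∈ s, max (x k - y) 0 ≤ y := by
    have := sum_nonneg fun k (_ : k ∈ s) => le_max_right (x k - y) 0
    linarith
  have h_top : max y M - ∑ k ∈ s, max (x k - max y M) 0 = max y M := by
    have hx : ∀ k ∈ s, x k ≤ max y M := fun k hk =>
      (hM ⟨k, hk, rfl⟩).trans (le_max_right y M)
    rw [sum_eq_zero fun k hk => max_eq_right (sub_nonpos.mpr (hx k hk)), sub_zero]
  obtain ⟨a, -, ha⟩ := intermediate_value_Icc (le_max_left y M)
    (continuous_sub_sum_max_sub s x).continuousOn ⟨h_le, h_top.symm ▸ le_max_left y M⟩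
  exact ⟨a, ha, fun b hb => (strictMono_sub_sum_max_sub s x).injective (hb.trans ha.symm)⟩

end SubSumMaxSub

theorem dist_lt_dist_of_real_inner_sub_nonpos {E : Type*} [NormedAddCommGroup E]
    [InnerProductSpace ℝ E] {w u v : E} (h : inner ℝ (w - v) (u - v) ≤ 0) (huv : u ≠ v) :
    dist w v < dist w u := by
  have hpos : 0 < ‖u - v‖ ^ 2 := pow_pos (norm_pos_iff.mpr (sub_ne_zero.mpr huv)) 2
  have hexpand : ‖w - u‖ ^ 2 = ‖w - v‖ ^ 2 - 2 * inner ℝ (w - v) (u - v) + ‖u - v‖ ^ 2 := by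
    rw [← norm_sub_sq_real, sub_sub_sub_cancel_right]
  rw [dist_eq_norm, dist_eq_norm]
  exact lt_of_pow_lt_pow_left₀ 2 (norm_nonneg _) (by nlinarith)

theorem EuclideanSpace.real_inner_eq_sum_erase_mul_sub {ι : Type*} [Fintype ι] [DecidableEq ι]
    {x y : EuclideanSpace ℝ ι} {j : ι} (hx : x j = -∑ k ∈ univ.erase j, x k) :
    inner ℝ x y = ∑ k ∈ univ.erase j, x k * (y k - y j) := by
  simp only [PiLp.inner_apply, RCLike.inner_apply, conj_trivial]
  rw [← sum_erase_add _ _ (mem_univ j), hx]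
  simp only [mul_sub, sum_sub_distrib, ← sum_mul, mul_comm (y _)]
  ring

section Projection

variable {L : ℕ} {ε a : ℝ} {w v : EuclideanSpace ℝ (Fin L)} {j : Fin L}

theorem mem_Rset_of_eq_min (hvj : v j = a + ε / Real.sqrt 2)
    (hvk : ∀ k : Fin L, k ≠ j → v k = min a (w k)) : v ∈ Rset L ε j := by
  intro ℓ hℓ
  rw [hvk ℓ hℓ, hvj]
  linarith [min_le_left a (w ℓ)]

theorem sub_eq_max_sub_of_eq_min (hvk : ∀ k : Fin L, k ≠ j → v k = min a (w k)) {k : Fin L}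
    (hk : k ≠ j) : w k - v k = max (w k - a) 0 := by
  rw [hvk k hk]
  rcases le_total (w k) a with h | h
  · rw [min_eq_right h, max_eq_right (by linarith)]
    ring
  · rw [min_eq_left h, max_eq_left (by linarith)]

theorem real_inner_sub_nonpos_of_mem_Rset (hvj : v j = a + ε / Real.sqrt 2)
    (hvk : ∀ k : Fin L, k ≠ j → v k = min a (w k))
    (ha : w j = a + ε / Real.sqrt 2 - ∑ k ∈ univ.erase j, max (w k - a) 0)
    {u : EuclideanSpace ℝ (Fin L)} (hu : u ∈ Rset L ε j) :
    inner ℝ (w - v) (u - v) ≤ 0 := by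
  have hres : ∀ k ∈ univ.erase j, (w - v) k = max (w k - a) 0 := fun k hk =>
    sub_eq_max_sub_of_eq_min hvk (ne_of_mem_erase hk)
  have hres_j : (w - v) j = -∑ k ∈ univ.erase j, (w - v) k := by
    rw [sum_congr rfl hres, PiLp.sub_apply, hvj, ha]
    ring
  rw [EuclideanSpace.real_inner_eq_sum_erase_mul_sub hres_j]
  refine sum_nonpos fun k hk => ?_
  have hkj := ne_of_mem_erase hk
  rw [hres k hk]
  rcases le_total (w k) a with h | h
  · rw [max_eq_right (by linarith), zero_mul]
  · have hvk_eq : v k = a := by rw [hvk k hkj, min_eq_left h]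
    have huk := hu k hkj
    simp only [PiLp.sub_apply, hvk_eq, hvj]
    exact mul_nonpos_of_nonneg_of_nonpos (le_max_of_le_right le_rfl) (by linarith)

end Projection

theorem projection_onto_Rset_general (L : ℕ) (ε : ℝ)
    (w : EuclideanSpace ℝ (Fin L)) (j : Fin L) :
    (∃! a : ℝ, w j = a + ε / Real.sqrt 2
        - ∑ k ∈ Finset.univ.erase j, max (w k - a) 0) ∧
    ∀ a : ℝ, w j = a + ε / Real.sqrt 2
        - ∑ k ∈ Finset.univ.erase j, max (w k - a) 0 →
      ∀ v : EuclideanSpace ℝ (Fin L),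
        v j = a + ε / Real.sqrt 2 → (∀ k : Fin L, k ≠ j → v k = min a (w k)) →
          v ∈ Rset L ε j ∧ ∀ u ∈ Rset L ε j, u ≠ v → dist w v < dist w u := by
  refine ⟨?_, fun a ha v hvj hvk => ⟨mem_Rset_of_eq_min hvj hvk, fun u hu huv => ?_⟩⟩
  · refine (existsUnique_congr fun a => ?_).mp
      (existsUnique_sub_sum_max_sub_eq (univ.erase j) w (w j - ε / Real.sqrt 2))
    constructor <;> intro h <;> linarith
  · exact dist_lt_dist_of_real_inner_sub_nonpos
      (real_inner_sub_nonpos_of_mem_Rset hvj hvk ha hu) huv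

/-- There is a unique `a ∈ ℝ` with `w_j = a + ε/√2 − Σ_{k≠j} (w_k − a)_+`; moreover, for
this `a`, the vector `v` with `v_j = a + ε/√2` and `v_k = min{a, w_k}` for `k ≠ j`
is the unique Euclidean projection of `w` onto `R_j^ε`. -/
theorem projection_onto_Rset (L : ℕ) (hL : 2 ≤ L) (ε : ℝ) (hε : 0 < ε)
    (w : EuclideanSpace ℝ (Fin L)) (j : Fin L) :
    (∃! a : ℝ, w j = a + ε / Real.sqrt 2
        - ∑ k ∈ Finset.univ.erase j, max (w k - a) 0) ∧
    ∀ a : ℝ, w j = a + ε / Real.sqrt 2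
        - ∑ k ∈ Finset.univ.erase j, max (w k - a) 0 →
      ∀ v : EuclideanSpace ℝ (Fin L),
        v j = a + ε / Real.sqrt 2 → (∀ k : Fin L, k ≠ j → v k = min a (w k)) →
          v ∈ Rset L ε j ∧ ∀ u ∈ Rset L ε j, u ≠ v → dist w v < dist w u :=
  projection_onto_Rset_general L ε w j
end
end
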